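/- Let n ≥ 1 and 1 < p₀ < ∞. Let φ : [1,∞) → [0,∞) be a nondecreasing function such that lim_{t→∞} φ(t)/t^{1/(p₀−1)} = 0. Then there is NO constant c > 0 such that for every weight w ∈ A_{p₀} and every f with ‖f‖_{L^{p₀}(w)} < ∞ one has ‖Mf‖_{L^{p₀}(w)} ≤ c φ([w]_{A_{p₀}}) ‖f‖_{L^{p₀}(w)}; i.e., Buckley's bound ‖M‖_{L^{p₀}(w)} ≤ c[w]_{A_{p₀}}^{1/(p₀−1)} admits no such improvement beyond the power scale. -/

import Mathlib

/-!
Take the power weight `w(x) = |xᵢ|^((1-δ)(p-1))`, whose dual weight `w^(1-p')` is `|xᵢ|^(δ-1)`,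
and `f = 1_{[0,1]ⁿ} |xᵢ|^(δ-1)`. Every cube average of `|t|^(δ-1)` is at most `(4/δ) R^(δ-1)`,
where `R` bounds `|xᵢ|` on the cube, so `[w]_{A_p} ≤ (4/δ)^(p-1)`. Averaging `f` over the cube
with `i`-th side `[0, xᵢ]` through `x` gives `Mf ≥ δ⁻¹ f`. Hence a bound `c φ([w]_{A_p})` forces
`φ(t) ≥ t^(1/(p-1)) / (4c)` at `t = (4/δ)^(p-1)` for every small `δ`.
-/

open MeasureTheory Filter
open scoped ENNReal NNReal

/-- A (closed) cube in ℝⁿ with sides parallel to the coordinate axes. -/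
def IsCube (n : ℕ) (Q : Set (Fin n → ℝ)) : Prop :=
  ∃ (a : Fin n → ℝ) (h : ℝ), 0 < h ∧ Q = {y | ∀ i, y i ∈ Set.Icc (a i) (a i + h)}

/-- Average of an `ℝ≥0∞`-valued function over a set. -/
noncomputable def setAvg (n : ℕ) (Q : Set (Fin n → ℝ)) (g : (Fin n → ℝ) → ℝ≥0∞) : ℝ≥0∞ :=
  (volume Q)⁻¹ * ∫⁻ y in Q, g y

/-- The Muckenhoupt `A_p` constant of a weight `w`. -/
noncomputable def ApConst (n : ℕ) (p : ℝ) (w : (Fin n → ℝ) → ℝ≥0∞) : ℝ≥0∞ :=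
  ⨆ (Q : Set (Fin n → ℝ)) (_ : IsCube n Q),
    setAvg n Q w * (setAvg n Q fun y => w y ^ (1 - p / (p - 1))) ^ (p - 1)

/-- A weight: a measurable nonnegative (`ℝ≥0∞`-valued) locally integrable function. -/
def IsWeight (n : ℕ) (w : (Fin n → ℝ) → ℝ≥0∞) : Prop :=
  Measurable w ∧ ∀ Q : Set (Fin n → ℝ), IsCube n Q → (∫⁻ y in Q, w y) < ∞

/-- Weighted L^p norm of an `ℝ≥0∞`-valued function. -/
noncomputable def wLpNormE (n : ℕ) (p : ℝ) (w : (Fin n → ℝ) → ℝ≥0∞)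
    (g : (Fin n → ℝ) → ℝ≥0∞) : ℝ≥0∞ :=
  (∫⁻ x, g x ^ p * w x) ^ (1 / p)

/-- Weighted L^p norm of a real function. -/
noncomputable def wLpNorm (n : ℕ) (p : ℝ) (w : (Fin n → ℝ) → ℝ≥0∞)
    (f : (Fin n → ℝ) → ℝ) : ℝ≥0∞ :=
  wLpNormE n p w fun x => (‖f x‖₊ : ℝ≥0∞)

/-- Unweighted L^p norm of a real function on ℝⁿ. -/
noncomputable def lpNorm (n : ℕ) (p : ℝ) (f : (Fin n → ℝ) → ℝ) : ℝ≥0∞ :=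
  (∫⁻ x, (‖f x‖₊ : ℝ≥0∞) ^ p) ^ (1 / p)

/-- Unweighted L^p norm of an `ℝ≥0∞`-valued function on ℝⁿ. -/
noncomputable def lpNormE (n : ℕ) (p : ℝ) (g : (Fin n → ℝ) → ℝ≥0∞) : ℝ≥0∞ :=
  (∫⁻ x, g x ^ p) ^ (1 / p)

/-- Operator norm on unweighted `L^p(ℝⁿ)`: the least `C ∈ [0,∞]` with
`‖Tf‖_p ≤ C ‖f‖_p` for all `f ∈ L^p`. -/
noncomputable def opNorm (n : ℕ) (p : ℝ)
    (T : ((Fin n → ℝ) → ℝ) → (Fin n → ℝ) → ℝ) : ℝ≥0∞ :=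
  sInf {C : ℝ≥0∞ | ∀ f : (Fin n → ℝ) → ℝ, Measurable f → lpNorm n p f < ∞ →
    lpNorm n p (T f) ≤ C * lpNorm n p f}

/-- The Hardy–Littlewood maximal operator (over cubes with sides parallel to the axes). -/
noncomputable def HLM (n : ℕ) (g : (Fin n → ℝ) → ℝ≥0∞) : (Fin n → ℝ) → ℝ≥0∞ :=
  fun x => ⨆ (Q : Set (Fin n → ℝ)) (_ : IsCube n Q) (_ : x ∈ Q), setAvg n Q g

/-- The operator norm of the Hardy–Littlewood maximal operator on `L^p(ℝⁿ)`. -/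
noncomputable def maximalOpNorm (n : ℕ) (p : ℝ) : ℝ≥0∞ :=
  sInf {C : ℝ≥0∞ | ∀ f : (Fin n → ℝ) → ℝ, Measurable f → lpNorm n p f < ∞ →
    lpNormE n p (HLM n fun y => (‖f y‖₊ : ℝ≥0∞)) ≤ C * lpNorm n p f}


open Set

lemma lintegral_Icc_zero_abs_rpow {c v : ℝ} (hc : -1 < c) (hv : 0 ≤ v) :
    ∫⁻ t in Icc 0 v, ENNReal.ofReal (|t| ^ c) = ENNReal.ofReal (v ^ (c + 1) / (c + 1)) := by
  have habs : ∫⁻ t in Icc 0 v, ENNReal.ofReal (|t| ^ c) = ∫⁻ t in Icc 0 v, ENNReal.ofReal (t ^ c) :=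
    setLIntegral_congr_fun measurableSet_Icc fun t ht => by rw [abs_of_nonneg ht.1]
  have hint : IntegrableOn (fun t : ℝ => t ^ c) (Icc 0 v) := by
    rw [← intervalIntegrable_iff_integrableOn_Icc_of_le hv]
    exact intervalIntegral.intervalIntegrable_rpow' hc
  have hnonneg : 0 ≤ᵐ[volume.restrict (Icc 0 v)] fun t : ℝ => t ^ c :=
    (ae_restrict_mem measurableSet_Icc).mono fun t ht => Real.rpow_nonneg ht.1 c
  rw [habs, ← ofReal_integral_eq_lintegral_ofReal hint hnonneg, integral_Icc_eq_integral_Ioc,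
    ← intervalIntegral.integral_of_le hv, integral_rpow (.inl hc),
    Real.zero_rpow (by linarith), sub_zero]

lemma setLAverage_Icc_zero_abs_rpow {c v : ℝ} (hc : -1 < c) (hv : 0 < v) :
    ⨍⁻ t in Icc 0 v, ENNReal.ofReal (|t| ^ c) ∂volume = ENNReal.ofReal (v ^ c / (c + 1)) := by
  rw [setLAverage_eq, lintegral_Icc_zero_abs_rpow hc hv.le, Real.volume_Icc, sub_zero,
    ← ENNReal.ofReal_div_of_pos hv, Real.rpow_add_one hv.ne']
  congr 1
  field_simp

lemma lintegral_Icc_neg_abs_le (F : ℝ → ℝ≥0∞) (R : ℝ) :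
    ∫⁻ t in Icc (-R) R, F |t| ≤ 2 * ∫⁻ t in Icc 0 R, F |t| := by
  have reflect : ∫⁻ t in Icc (-R) 0, F |t| = ∫⁻ t in Icc 0 R, F |t| := by
    rw [← lintegral_indicator measurableSet_Icc, ← lintegral_indicator measurableSet_Icc,
      ← lintegral_neg_eq_self]
    congr 1; ext t
    simp only [indicator, mem_Icc, abs_neg, neg_le_neg_iff, neg_nonpos, and_comm]
  calc ∫⁻ t in Icc (-R) R, F |t|
      ≤ ∫⁻ t in Icc (-R) 0 ∪ Icc 0 R, F |t| :=
        lintegral_mono_set fun t ht => (le_total t 0).imp (fun h => ⟨ht.1, h⟩) (fun h => ⟨h, ht.2⟩)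
    _ ≤ (∫⁻ t in Icc (-R) 0, F |t|) + ∫⁻ t in Icc 0 R, F |t| := lintegral_union_le _ _ _
    _ = 2 * ∫⁻ t in Icc 0 R, F |t| := by rw [reflect, two_mul]

lemma abs_mem_Icc_of_mem_Icc {s h t : ℝ} (ht : t ∈ Icc s (s + h)) :
    |t| ∈ Icc (max |s| |s + h| - h) (max |s| |s + h|) := by
  refine ⟨?_, abs_le_max_abs_abs ht.1 ht.2⟩
  have h1 := abs_sub_abs_le_abs_sub s t
  have h2 := abs_sub_abs_le_abs_sub (s + h) t
  rw [abs_of_nonpos (by linarith [ht.1] : s - t ≤ 0)] at h1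
  rw [abs_of_nonneg (by linarith [ht.2] : 0 ≤ s + h - t)] at h2
  exact sub_le_iff_le_add.2 (max_le (by linarith [ht.2]) (by linarith [ht.1]))

lemma half_le_max_abs (s : ℝ) {h : ℝ} (hh : 0 ≤ h) : h / 2 ≤ max |s| |s + h| := by
  have := abs_sub_abs_le_abs_sub (s + h) s
  have := abs_sub (s + h) s
  rw [add_sub_cancel_left, abs_of_nonneg hh] at this
  linarith [le_max_left |s| |s + h|, le_max_right |s| |s + h|]

lemma setLAverage_Icc_le {g : ℝ → ℝ≥0∞} {s h : ℝ} {C : ℝ≥0∞} (hh : 0 < h)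
    (hg : ∀ t ∈ Icc s (s + h), g t ≤ C) : ⨍⁻ t in Icc s (s + h), g t ∂volume ≤ C := by
  have hvol : volume (Icc s (s + h)) = ENNReal.ofReal h := by
    rw [Real.volume_Icc, add_sub_cancel_left]
  calc ⨍⁻ t in Icc s (s + h), g t ∂volume ≤ ⨍⁻ _ in Icc s (s + h), C ∂volume :=
        laverage_mono_ae ((ae_restrict_mem measurableSet_Icc).mono fun t ht => hg t ht)
    _ = C := setLAverage_const (by simp [hvol, hh]) (by simp [hvol]) C

lemma setLAverage_abs_rpow_le {a s h : ℝ} (ha : 0 ≤ a) (hh : 0 < h) :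
    ⨍⁻ t in Icc s (s + h), ENNReal.ofReal (|t| ^ a) ∂volume ≤
      ENNReal.ofReal (max |s| |s + h| ^ a) :=
  setLAverage_Icc_le hh fun t ht => ENNReal.ofReal_le_ofReal <|
    Real.rpow_le_rpow (abs_nonneg t) (abs_mem_Icc_of_mem_Icc ht).2 ha

lemma setLAverage_abs_rpow_sub_one_le {δ s h : ℝ} (hδ : 0 < δ) (hδ1 : δ ≤ 1) (hh : 0 < h) :
    ⨍⁻ t in Icc s (s + h), ENNReal.ofReal (|t| ^ (δ - 1)) ∂volume ≤
      ENNReal.ofReal (4 / δ * max |s| |s + h| ^ (δ - 1)) := by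
  set R := max |s| |s + h|
  have hR : 0 < R := (half_pos hh).trans_le (half_le_max_abs s hh.le)
  -- Near the origin the interval lies in `[-R, R]`; away from it `|t| ≥ R / 2` on the interval.
  rcases le_or_gt R (2 * h) with hRh | hRh
  · have hint : ∫⁻ t in Icc s (s + h), ENNReal.ofReal (|t| ^ (δ - 1)) ≤
        2 * ENNReal.ofReal (R ^ δ / δ) :=
      calc ∫⁻ t in Icc s (s + h), ENNReal.ofReal (|t| ^ (δ - 1))
          ≤ ∫⁻ t in Icc (-R) R, ENNReal.ofReal (|t| ^ (δ - 1)) :=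
            lintegral_mono_set fun t ht => abs_le.1 (abs_mem_Icc_of_mem_Icc ht).2
        _ ≤ 2 * ∫⁻ t in Icc 0 R, ENNReal.ofReal (|t| ^ (δ - 1)) :=
            lintegral_Icc_neg_abs_le (fun u => ENNReal.ofReal (u ^ (δ - 1))) R
        _ = 2 * ENNReal.ofReal (R ^ δ / δ) := by
            rw [lintegral_Icc_zero_abs_rpow (by linarith) hR.le, sub_add_cancel]
    rw [setLAverage_eq, Real.volume_Icc, add_sub_cancel_left]
    calc (∫⁻ t in Icc s (s + h), ENNReal.ofReal (|t| ^ (δ - 1))) / ENNReal.ofReal h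
        ≤ 2 * ENNReal.ofReal (R ^ δ / δ) / ENNReal.ofReal h := by gcongr
      _ = ENNReal.ofReal (R ^ δ / δ * (2 / h)) := by
          rw [← ENNReal.ofReal_ofNat 2, ← ENNReal.ofReal_mul zero_le_two,
            ← ENNReal.ofReal_div_of_pos hh]
          ring_nf
      _ ≤ ENNReal.ofReal (4 / δ * R ^ (δ - 1)) := by
          refine ENNReal.ofReal_le_ofReal ?_
          rw [Real.rpow_sub_one hR.ne']
          calc R ^ δ / δ * (2 / h) ≤ R ^ δ / δ * (4 / R) :=
                mul_le_mul_of_nonneg_left ((div_le_div_iff₀ hh hR).2 (by linarith)) (by positivity)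
            _ = 4 / δ * (R ^ δ / R) := by ring
  · refine setLAverage_Icc_le hh fun t ht => ENNReal.ofReal_le_ofReal ?_
    have hRt : R / 2 ≤ |t| := by linarith [(abs_mem_Icc_of_mem_Icc ht).1]
    have h2 : (1 / 2 : ℝ) ≤ 2 ^ (δ - 1) := by
      calc (1 / 2 : ℝ) = 2 ^ (-1 : ℝ) := by norm_num
        _ ≤ 2 ^ (δ - 1) := Real.rpow_le_rpow_of_exponent_le one_le_two (by linarith)
    calc |t| ^ (δ - 1) ≤ (R / 2) ^ (δ - 1) :=
          Real.rpow_le_rpow_of_nonpos (half_pos hR) hRt (by linarith)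
      _ = R ^ (δ - 1) / 2 ^ (δ - 1) := Real.div_rpow hR.le zero_le_two _
      _ ≤ R ^ (δ - 1) / (1 / 2) := by gcongr
      _ = 2 * R ^ (δ - 1) := by ring
      _ ≤ 4 / δ * R ^ (δ - 1) := by
          gcongr
          rw [le_div_iff₀ hδ]; linarith

section

variable {n : ℕ}

def cube (a : Fin n → ℝ) (h : ℝ) : Set (Fin n → ℝ) := {y | ∀ i, y i ∈ Icc (a i) (a i + h)}

lemma cube_eq_pi (a : Fin n → ℝ) (h : ℝ) :
    cube a h = univ.pi fun i => Icc (a i) (a i + h) := by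
  ext y; simp only [cube, mem_univ_pi]; rfl

lemma isCube_cube (a : Fin n → ℝ) {h : ℝ} (hh : 0 < h) : IsCube n (cube a h) :=
  ⟨a, h, hh, rfl⟩

lemma measurableSet_cube (a : Fin n → ℝ) (h : ℝ) : MeasurableSet (cube a h) := by
  rw [cube_eq_pi]; exact .univ_pi fun _ => measurableSet_Icc

lemma volume_cube (a : Fin n → ℝ) (h : ℝ) : volume (cube a h) = ENNReal.ofReal h ^ n := by
  rw [cube_eq_pi, volume_pi_pi]; simp

lemma setLIntegral_cube_comp_eval {g : ℝ → ℝ≥0∞} (hg : Measurable g) (a : Fin n → ℝ)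
    (h : ℝ) (i : Fin n) :
    ∫⁻ y in cube a h, g (y i) = ENNReal.ofReal h ^ (n - 1) * ∫⁻ t in Icc (a i) (a i + h), g t := by
  classical
  rw [cube_eq_pi, volume_pi, Measure.restrict_pi_pi,
    ← lintegral_map hg (measurable_pi_apply i), Measure.pi_map_eval, lintegral_smul_measure]
  simp [Finset.prod_const, Finset.card_erase_of_mem]

lemma setAvg_cube_comp_eval {g : ℝ → ℝ≥0∞} (hg : Measurable g) (a : Fin n → ℝ)
    {h : ℝ} (hh : 0 < h) (i : Fin n) :
    setAvg n (cube a h) (fun y => g (y i)) = ⨍⁻ t in Icc (a i) (a i + h), g t ∂volume := by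
  obtain ⟨m, rfl⟩ : ∃ m, n = m + 1 := ⟨n - 1, by have := i.pos; omega⟩
  have h0 : ENNReal.ofReal h ≠ 0 := (ENNReal.ofReal_pos.2 hh).ne'
  rw [setAvg, setLIntegral_cube_comp_eval hg, volume_cube, setLAverage_eq, Real.volume_Icc,
    add_sub_cancel_left, pow_succ, ENNReal.mul_inv (.inl (pow_ne_zero m h0)) (.inr h0),
    Nat.add_sub_cancel, mul_right_comm, ← mul_assoc,
    ENNReal.inv_mul_cancel (pow_ne_zero m h0) (ENNReal.pow_ne_top ENNReal.ofReal_ne_top), one_mul,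
    div_eq_mul_inv]

lemma setAvg_le_HLM {Q : Set (Fin n → ℝ)} (hQ : IsCube n Q) {x : Fin n → ℝ} (hx : x ∈ Q)
    (g : (Fin n → ℝ) → ℝ≥0∞) : setAvg n Q g ≤ HLM n g x :=
  le_iSup₂_of_le Q hQ (le_iSup_of_le hx le_rfl)

lemma mul_wLpNormE_le {p : ℝ} (hp : 0 < p) (w : (Fin n → ℝ) → ℝ≥0∞)
    {g G : (Fin n → ℝ) → ℝ≥0∞} {C : ℝ≥0∞} (h : ∀ x, C * g x ≤ G x) :
    C * wLpNormE n p w g ≤ wLpNormE n p w G := by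
  have hC : C = (C ^ p) ^ (1 / p) := by
    rw [← ENNReal.rpow_mul, mul_one_div_cancel hp.ne', ENNReal.rpow_one]
  rw [wLpNormE, wLpNormE, hC, ← ENNReal.mul_rpow_of_nonneg _ _ (by positivity)]
  refine ENNReal.rpow_le_rpow ((lintegral_const_mul_le _ _).trans (lintegral_mono fun x => ?_))
    (by positivity)
  rw [← mul_assoc, ← ENNReal.mul_rpow_of_nonneg _ _ hp.le]
  gcongr
  exact h x

lemma mem_cube_max_sub {x : Fin n → ℝ} (hx : x ∈ cube 0 1) (i : Fin n) :
    x ∈ cube (fun j => max (x j - x i) 0) (x i) := by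
  simp only [cube, Pi.zero_apply, zero_add, mem_ofPred_eq, mem_Icc] at hx ⊢
  exact fun j => ⟨max_le (by linarith [hx i]) (hx j).1, by linarith [le_max_left (x j - x i) 0]⟩

lemma cube_max_sub_subset {x : Fin n → ℝ} (hx : x ∈ cube 0 1) (i : Fin n) :
    cube (fun j => max (x j - x i) 0) (x i) ⊆ cube 0 1 := by
  simp only [cube, Pi.zero_apply, zero_add, mem_ofPred_eq, mem_Icc] at hx ⊢
  refine fun y hy j => ⟨(le_max_right _ _).trans (hy j).1, (hy j).2.trans ?_⟩
  rw [← max_add_add_right, sub_add_cancel, zero_add]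
  exact max_le (hx j).2 (hx i).2

noncomputable def powerWeight (i : Fin n) (a : ℝ) : (Fin n → ℝ) → ℝ≥0∞ :=
  fun y => ENNReal.ofReal (|y i| ^ a)

section PowerWeight

variable (i : Fin n) {p δ : ℝ}

lemma isWeight_powerWeight {a : ℝ} (ha : 0 ≤ a) : IsWeight n (powerWeight i a) := by
  refine ⟨by unfold powerWeight; fun_prop, ?_⟩
  rintro _ ⟨b, h, -, rfl⟩
  refine setLIntegral_lt_top_of_le_nnreal (s := cube b h) ?_
    ⟨(max |b i| |b i + h| ^ a).toNNReal, fun y hy => ?_⟩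
  · rw [volume_cube]; exact ENNReal.pow_ne_top ENNReal.ofReal_ne_top
  exact ENNReal.ofReal_le_ofReal <|
    Real.rpow_le_rpow (abs_nonneg _) (abs_le_max_abs_abs (hy i).1 (hy i).2) ha

lemma setAvg_cube_powerWeight_rpow (a r : ℝ) (b : Fin n → ℝ) {h : ℝ} (hh : 0 < h) :
    setAvg n (cube b h) (fun y => powerWeight i a y ^ r) =
      ⨍⁻ t in Icc (b i) (b i + h), ENNReal.ofReal (|t| ^ (a * r)) ∂volume := by
  -- Off `t = 0` only: there `ofReal (|t| ^ a) ^ r` may be `∞` while the right side is `0`.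
  refine (setAvg_cube_comp_eval (g := fun t => ENNReal.ofReal (|t| ^ a) ^ r) (by fun_prop) b hh
    i).trans <| laverage_congr (ae_restrict_of_ae ((Measure.ae_ne volume 0).mono fun t ht => ?_))
  dsimp only
  rw [ENNReal.ofReal_rpow_of_pos (Real.rpow_pos_of_pos (abs_pos.2 ht) a),
    ← Real.rpow_mul (abs_nonneg t)]

lemma setAvg_cube_powerWeight (a : ℝ) (b : Fin n → ℝ) {h : ℝ} (hh : 0 < h) :
    setAvg n (cube b h) (powerWeight i a) =
      ⨍⁻ t in Icc (b i) (b i + h), ENNReal.ofReal (|t| ^ a) ∂volume := by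
  simpa using setAvg_cube_powerWeight_rpow i a 1 b hh

-- `1 - p / (p - 1) = 1 - p'`: the dual weight `w ^ (1 - p')` of `|t| ^ ((1 - δ) * (p - 1))`
-- is `|t| ^ (δ - 1)`.
lemma dual_exponent_mul (hp : 1 < p) : (1 - δ) * (p - 1) * (1 - p / (p - 1)) = δ - 1 := by
  have : p - 1 ≠ 0 := by linarith
  field_simp
  ring

lemma ApConst_powerWeight_le (hp : 1 < p) (hδ : 0 < δ) (hδ1 : δ ≤ 1) :
    ApConst n p (powerWeight i ((1 - δ) * (p - 1))) ≤ ENNReal.ofReal ((4 / δ) ^ (p - 1)) := by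
  refine iSup₂_le fun _ hQ => ?_
  obtain ⟨b, h, hh, rfl⟩ := hQ
  set a := (1 - δ) * (p - 1)
  set R := max |b i| |b i + h|
  have hR : 0 < R := (half_pos hh).trans_le (half_le_max_abs (b i) hh.le)
  change setAvg n (cube b h) _ * setAvg n (cube b h) (fun y => _ ^ _) ^ (p - 1) ≤ _
  rw [setAvg_cube_powerWeight i a b hh, setAvg_cube_powerWeight_rpow i a _ b hh,
    dual_exponent_mul hp]
  calc _ ≤ ENNReal.ofReal (R ^ a) * ENNReal.ofReal (4 / δ * R ^ (δ - 1)) ^ (p - 1) := by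
        gcongr
        · exact setLAverage_abs_rpow_le (by nlinarith) hh
        · exact setLAverage_abs_rpow_sub_one_le hδ hδ1 hh
    _ = ENNReal.ofReal ((4 / δ) ^ (p - 1)) := by
        rw [ENNReal.ofReal_rpow_of_nonneg (by positivity) (by linarith),
          ← ENNReal.ofReal_mul (by positivity), Real.mul_rpow (by positivity) (by positivity),
          ← Real.rpow_mul hR.le, mul_left_comm, ← Real.rpow_add hR]
        congr 1
        rw [show a + (δ - 1) * (p - 1) = 0 by ring, Real.rpow_zero, mul_one]

lemma le_ApConst_powerWeight (hp : 1 < p) (hδ : 0 < δ) (hδ1 : δ ≤ 1) :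
    ENNReal.ofReal (δ⁻¹ ^ (p - 1) / p) ≤ ApConst n p (powerWeight i ((1 - δ) * (p - 1))) := by
  set a := (1 - δ) * (p - 1)
  refine le_iSup₂_of_le (cube 0 1) (isCube_cube 0 one_pos) ?_
  rw [setAvg_cube_powerWeight i a 0 one_pos, setAvg_cube_powerWeight_rpow i a _ 0 one_pos,
    dual_exponent_mul hp, Pi.zero_apply, zero_add,
    setLAverage_Icc_zero_abs_rpow (by nlinarith) one_pos,
    setLAverage_Icc_zero_abs_rpow (by linarith) one_pos, sub_add_cancel, Real.one_rpow,
    Real.one_rpow, ENNReal.ofReal_rpow_of_nonneg (by positivity) (by linarith),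
    ← ENNReal.ofReal_mul (by positivity)]
  refine ENNReal.ofReal_le_ofReal ?_
  rw [one_div, one_div, div_eq_mul_inv, mul_comm (a + 1)⁻¹]
  exact mul_le_mul_of_nonneg_left (inv_anti₀ (by nlinarith) (by nlinarith)) (by positivity)

end PowerWeight

noncomputable def cubePowerFn (i : Fin n) (δ : ℝ) : (Fin n → ℝ) → ℝ :=
  (cube 0 1).indicator fun y => |y i| ^ (δ - 1)

section CubePowerFn

variable (i : Fin n) {p δ : ℝ}

lemma measurable_cubePowerFn : Measurable (cubePowerFn i δ) :=
  (by fun_prop : Measurable fun y : Fin n → ℝ => |y i| ^ (δ - 1)).indicator (measurableSet_cube 0 1)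

lemma enorm_cubePowerFn (y : Fin n → ℝ) :
    (‖cubePowerFn i δ y‖₊ : ℝ≥0∞) = (cube 0 1).indicator (powerWeight i (δ - 1)) y := by
  by_cases hy : y ∈ cube 0 1
  · simp [cubePowerFn, powerWeight, hy, ← enorm_eq_nnnorm, Real.enorm_eq_ofReal, Real.rpow_nonneg]
  · simp [cubePowerFn, hy]

lemma wLpNorm_cubePowerFn (hp : 0 < p) (hδ : 0 < δ) :
    wLpNorm n p (powerWeight i ((1 - δ) * (p - 1))) (cubePowerFn i δ) =
      ENNReal.ofReal δ⁻¹ ^ (1 / p) := by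
  set a := (1 - δ) * (p - 1)
  have hprofile : ∀ t : ℝ, t ≠ 0 →
      ENNReal.ofReal (|t| ^ (δ - 1)) ^ p * ENNReal.ofReal (|t| ^ a) =
        ENNReal.ofReal (|t| ^ (δ - 1)) := by
    intro t ht
    have ht' := abs_pos.2 ht
    rw [ENNReal.ofReal_rpow_of_pos (by positivity), ← ENNReal.ofReal_mul (by positivity),
      ← Real.rpow_mul ht'.le, ← Real.rpow_add ht']
    congr 2
    ring
  rw [wLpNorm, wLpNormE]
  congr 1
  calc ∫⁻ x, (‖cubePowerFn i δ x‖₊ : ℝ≥0∞) ^ p * powerWeight i a x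
      = ∫⁻ y in cube 0 1, powerWeight i (δ - 1) y ^ p * powerWeight i a y := by
        rw [← lintegral_indicator (measurableSet_cube 0 1)]
        refine lintegral_congr fun x => ?_
        by_cases hx : x ∈ cube 0 1
        · simp [enorm_cubePowerFn, hx]
        · simp [enorm_cubePowerFn, hx, ENNReal.zero_rpow_of_pos hp]
    _ = ∫⁻ t in Icc 0 1, ENNReal.ofReal (|t| ^ (δ - 1)) ^ p * ENNReal.ofReal (|t| ^ a) := by
        simpa [powerWeight] using setLIntegral_cube_comp_eval
          (g := fun t => ENNReal.ofReal (|t| ^ (δ - 1)) ^ p * ENNReal.ofReal (|t| ^ a))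
          (by fun_prop) 0 1 i
    _ = ∫⁻ t in Icc 0 1, ENNReal.ofReal (|t| ^ (δ - 1)) :=
        lintegral_congr_ae (ae_restrict_of_ae ((Measure.ae_ne volume 0).mono hprofile))
    _ = ENNReal.ofReal δ⁻¹ := by
        rw [lintegral_Icc_zero_abs_rpow (by linarith) zero_le_one]
        simp

lemma ofReal_inv_mul_le_HLM_cubePowerFn (hδ : 0 < δ) (hδ1 : δ < 1) (x : Fin n → ℝ) :
    ENNReal.ofReal δ⁻¹ * ‖cubePowerFn i δ x‖₊ ≤
      HLM n (fun y => (‖cubePowerFn i δ y‖₊ : ℝ≥0∞)) x := by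
  rw [enorm_cubePowerFn]
  by_cases hx : x ∈ cube 0 1
  swap
  · simp [hx]
  rw [indicator_of_mem hx]
  rcases (show 0 ≤ x i from (hx i).1).eq_or_lt with hxi | hxi
  · simp [powerWeight, ← hxi, Real.zero_rpow (by linarith : δ - 1 ≠ 0)]
  set Q := cube (fun j => max (x j - x i) 0) (x i)
  calc ENNReal.ofReal δ⁻¹ * powerWeight i (δ - 1) x = setAvg n Q (powerWeight i (δ - 1)) := by
        rw [setAvg_cube_powerWeight i _ _ hxi, sub_self, max_self, zero_add,
          setLAverage_Icc_zero_abs_rpow (by linarith) hxi, sub_add_cancel, powerWeight,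
          abs_of_pos hxi, ← ENNReal.ofReal_mul (by positivity), div_eq_inv_mul]
    _ = setAvg n Q (fun y => (‖cubePowerFn i δ y‖₊ : ℝ≥0∞)) := by
        rw [setAvg, setAvg, setLIntegral_congr_fun (measurableSet_cube _ _) fun y hy =>
          ((enorm_cubePowerFn i y).trans (indicator_of_mem (cube_max_sub_subset hx i hy) _)).symm]
    _ ≤ _ := setAvg_le_HLM (isCube_cube _ hxi) (mem_cube_max_sub hx i) _

end CubePowerFn

end

def MaximalBoundedBy (n : ℕ) (p : ℝ) (Φ : ℝ → ℝ) : Prop :=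
  ∀ w : (Fin n → ℝ) → ℝ≥0∞, IsWeight n w → ApConst n p w < ∞ →
    ∀ f : (Fin n → ℝ) → ℝ, Measurable f → wLpNorm n p w f < ∞ →
      wLpNormE n p w (HLM n fun y => (‖f y‖₊ : ℝ≥0∞)) ≤
        ENNReal.ofReal (Φ (ApConst n p w).toReal) * wLpNorm n p w f

lemma inv_le_of_maximalBoundedBy {n : ℕ} (i : Fin n) {p : ℝ} (hp : 1 < p) {Φ : ℝ → ℝ}
    (hΦ : MonotoneOn Φ (Ici 1)) (H : MaximalBoundedBy n p Φ) {δ : ℝ} (hδ : 0 < δ) (hδ1 : δ < 1)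
    (hδp : p ≤ δ⁻¹ ^ (p - 1)) : δ⁻¹ ≤ Φ ((4 / δ) ^ (p - 1)) := by
  set w := powerWeight i ((1 - δ) * (p - 1))
  set A := (ApConst n p w).toReal
  have hA_le := ApConst_powerWeight_le i hp hδ hδ1.le
  have hA_fin : ApConst n p w < ∞ := hA_le.trans_lt ENNReal.ofReal_lt_top
  have hA_upper : A ≤ (4 / δ) ^ (p - 1) := ENNReal.toReal_le_of_le_ofReal (by positivity) hA_le
  have hA_one : 1 ≤ A := by
    have := ENNReal.toReal_mono hA_fin.ne (le_ApConst_powerWeight i hp hδ hδ1.le)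
    rw [ENNReal.toReal_ofReal (by positivity)] at this
    exact ((one_le_div (by linarith)).2 hδp).trans this
  have hnorm := wLpNorm_cubePowerFn (p := p) i (by linarith) hδ
  have hN0 : ENNReal.ofReal δ⁻¹ ^ (1 / p) ≠ 0 := by positivity
  have hNtop : ENNReal.ofReal δ⁻¹ ^ (1 / p) ≠ ∞ :=
    ENNReal.rpow_ne_top_of_nonneg (by positivity) ENNReal.ofReal_ne_top
  have hbound := (mul_wLpNormE_le (by linarith) w
    (ofReal_inv_mul_le_HLM_cubePowerFn i hδ hδ1)).trans
    (H w (isWeight_powerWeight i (by nlinarith)) hA_fin _ (measurable_cubePowerFn i)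
      (hnorm ▸ hNtop.lt_top))
  rw [← wLpNorm, hnorm, ENNReal.mul_le_mul_iff_left hN0 hNtop,
    ENNReal.ofReal_le_ofReal_iff'] at hbound
  exact (hbound.resolve_right (inv_pos.2 hδ).not_ge).trans
    (hΦ hA_one (hA_one.trans hA_upper) hA_upper)

theorem statement6_general (n : ℕ) (hn : 1 ≤ n) (p₀ : ℝ) (hp₀ : 1 < p₀)
    (φ : ℝ → ℝ) (hφmono : MonotoneOn φ (Set.Ici 1))
    (hφlim : Tendsto (fun t : ℝ => φ t / t ^ (1 / (p₀ - 1))) atTop (nhds 0)) :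
    ¬ ∃ c : ℝ, 0 < c ∧ ∀ w : (Fin n → ℝ) → ℝ≥0∞, IsWeight n w → ApConst n p₀ w < ∞ →
      ∀ f : (Fin n → ℝ) → ℝ, Measurable f → wLpNorm n p₀ w f < ∞ →
        wLpNormE n p₀ w (HLM n fun y => (‖f y‖₊ : ℝ≥0∞)) ≤
          ENNReal.ofReal (c * φ ((ApConst n p₀ w).toReal)) * wLpNorm n p₀ w f := by
  rintro ⟨c, hc, H⟩
  have hp : 0 < p₀ - 1 := by linarith
  have hcφ : MonotoneOn (fun t => c * φ t) (Ici 1) := fun x hx y hy hxy =>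
    mul_le_mul_of_nonneg_left (hφmono hx hy hxy) hc.le
  have hlower : ∀ᶠ s in atTop,
      (4 * c)⁻¹ ≤ φ ((4 * s) ^ (p₀ - 1)) / ((4 * s) ^ (p₀ - 1)) ^ (1 / (p₀ - 1)) := by
    filter_upwards [eventually_gt_atTop 1, (tendsto_rpow_atTop hp).eventually_ge_atTop p₀]
      with s hs hsp
    have key := inv_le_of_maximalBoundedBy ⟨0, hn⟩ hp₀ hcφ H (inv_pos.2 (by linarith))
      (inv_lt_one_of_one_lt₀ hs) (by rwa [inv_inv])
    rw [inv_inv, div_inv_eq_mul] at key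
    rw [one_div, Real.rpow_rpow_inv (by positivity) hp.ne', le_div_iff₀ (by positivity)]
    calc (4 * c)⁻¹ * (4 * s) = c⁻¹ * s := by field_simp
      _ ≤ φ ((4 * s) ^ (p₀ - 1)) := by rwa [inv_mul_le_iff₀ hc]
  have hlim := hφlim.comp ((tendsto_rpow_atTop hp).comp (tendsto_id.const_mul_atTop four_pos))
  have hupper := hlim.eventually_lt_const (show (0 : ℝ) < (4 * c)⁻¹ by positivity)
  obtain ⟨s, hs, hs'⟩ := (hlower.and hupper).exists
  exact hs.not_gt hs'

/-- Buckley's bound for the maximal function admits no improvement beyond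
the power scale: if `φ : [1,∞) → [0,∞)` is nondecreasing with
`φ(t)/t^{1/(p₀−1)} → 0` as `t → ∞`, there is no constant `c > 0` with
`‖Mf‖_{L^{p₀}(w)} ≤ c φ([w]_{A_{p₀}}) ‖f‖_{L^{p₀}(w)}` for all `w ∈ A_{p₀}`. -/
theorem statement6 (n : ℕ) (hn : 1 ≤ n) (p₀ : ℝ) (hp₀ : 1 < p₀)
    (φ : ℝ → ℝ) (hφmono : MonotoneOn φ (Set.Ici 1)) (hφ0 : ∀ t, 1 ≤ t → 0 ≤ φ t)
    (hφlim : Tendsto (fun t : ℝ => φ t / t ^ (1 / (p₀ - 1))) atTop (nhds 0)) :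
    ¬ ∃ c : ℝ, 0 < c ∧ ∀ w : (Fin n → ℝ) → ℝ≥0∞, IsWeight n w → ApConst n p₀ w < ∞ →
      ∀ f : (Fin n → ℝ) → ℝ, Measurable f → wLpNorm n p₀ w f < ∞ →
        wLpNormE n p₀ w (HLM n fun y => (‖f y‖₊ : ℝ≥0∞)) ≤
          ENNReal.ofReal (c * φ ((ApConst n p₀ w).toReal)) * wLpNorm n p₀ w f :=
  statement6_general n hn p₀ hp₀ φ hφmono hφlim
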